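/- Let a, b, c ∈ ℂ, let G(a,b,c) = {(1,0), (a,1), (b,1), (c,1)} ⊆ ℂ², and let Θ ⊆ 𝕋 have exactly four elements. Then G(a,b,c) fails Θ-PR in ℂ² if and only if a = b, or b = c, or a = c, or there exists an ordering (θ_1, θ_2, θ_3, θ_4) of the four elements of Θ such that (c − a)/(b − a) equals the complex conjugate of CR(θ_1, θ_2; θ_3, θ_4). -/

import Mathlib

open MeasureTheory Set

noncomputable section

/-- The unit circle in the complex plane. -/
def unitCircle : Set ℂ := {z : ℂ | ‖z‖ = 1}

/-- `G` does `Θ`-PR in `H`.  The paper inner product `⟨f,g⟩` (linear in the first argument)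
corresponds to Mathlib's `inner g f` (which is linear in the second argument). -/
def DoesPR {H : Type*} [NormedAddCommGroup H] [InnerProductSpace ℂ H]
    (G : Set H) (Θ : Set ℂ) : Prop :=
  ∀ f h : H, (∀ g ∈ G, ∃ θ ∈ Θ, (inner ℂ g f : ℂ) = θ * (inner ℂ g h : ℂ)) →
    ∃ θ ∈ Θ, f = θ • h

/-- The vector `(x, y)` in `ℂ²`. -/
def vec2 (x y : ℂ) : EuclideanSpace ℂ (Fin 2) := WithLp.toLp 2 ![x, y]

/-- The system `G(a,b,c) = {(1,0), (a,1), (b,1), (c,1)} ⊆ ℂ²`. -/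
def Gabc (a b c : ℂ) : Set (EuclideanSpace ℂ (Fin 2)) :=
  {vec2 1 0, vec2 a 1, vec2 b 1, vec2 c 1}

/-- The cross ratio of four complex numbers. -/
def crossRatio (z₁ z₂ z₃ z₄ : ℂ) : ℂ :=
  ((z₁ - z₃) * (z₂ - z₄)) / ((z₁ - z₄) * (z₂ - z₃))

/-!
Write `f = (f₀, f₁)`, `h = (h₀, h₁)`. The vector `(1, 0)` forces `f₀ = α h₀` with `α ∈ Θ`, and
`h₀ = 0` would force `f` to be a `Θ`-multiple of `h`; normalising `h = (1, s)`, `f = (α, t)`, the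
vectors `(x, 1)` then say that the Möbius map `z ↦ (α z + t) / (z + s)` sends `x̄` into `Θ` for
`x = a, b, c`, and `f ∉ Θ h` says that the map is non-degenerate. Such a map is injective, sends `∞`
to `α` and preserves cross ratios, so for distinct `a, b, c` it maps `∞, ā, b̄, c̄` onto the four
points of `Θ`, and `(c̄ - ā) / (b̄ - ā) = CR(c̄, b̄; ā, ∞)` is the cross ratio of their images.
Conversely a Möbius map can take three prescribed distinct values at `∞` and two points, and the
cross ratio then pins down its value at a third point.
-/

open ComplexConjugate

lemma inner_vec2 (x y : ℂ) (f : EuclideanSpace ℂ (Fin 2)) :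
    inner ℂ (vec2 x y) f = conj x * f 0 + conj y * f 1 := by
  simp [vec2, PiLp.inner_apply, Fin.sum_univ_two, mul_comm]

lemma eq_smul_iff_of_fin_two (f h : EuclideanSpace ℂ (Fin 2)) (θ : ℂ) :
    f = θ • h ↔ f 0 = θ * h 0 ∧ f 1 = θ * h 1 := by
  rw [PiLp.ext_iff, Fin.forall_fin_two]
  rfl

/-- Some Möbius map `z ↦ (α z + t) / (z + s)` with `t ≠ α s` sends `∞` to `α ∈ Θ` and `S` into `Θ`.
Clearing denominators loses nothing: `z + s = 0` in an equation would force `t = α s`. -/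
def MobiusInto (Θ S : Set ℂ) : Prop :=
  ∃ α ∈ Θ, ∃ s t : ℂ, t ≠ α * s ∧ ∀ z ∈ S, ∃ θ ∈ Θ, α * z + t = θ * (z + s)

lemma not_doesPR_insert_image_iff {X : Set ℂ} (hX : X.Nonempty) (Θ : Set ℂ) :
    ¬ DoesPR (insert (vec2 1 0) ((fun x ↦ vec2 x 1) '' X)) Θ ↔ MobiusInto Θ (conj '' X) := by
  simp only [DoesPR, MobiusInto, Set.forall_mem_insert, Set.forall_mem_image, inner_vec2,
    map_one, map_zero, one_mul, zero_mul, add_zero, eq_smul_iff_of_fin_two]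
  push Not
  constructor
  · rintro ⟨f, h, ⟨⟨α, hα, hf0⟩, hX'⟩, hne⟩
    by_cases hh0 : h 0 = 0
    · obtain ⟨x, hx⟩ := hX
      obtain ⟨θ, hθ, heq⟩ := hX' hx
      rw [hf0, hh0] at heq
      exact absurd (by simpa using heq) (hne θ hθ (by rw [hf0, hh0, mul_zero, mul_zero]))
    · have hh1 : h 1 = h 1 / h 0 * h 0 := (div_mul_cancel₀ _ hh0).symm
      have hf1 : f 1 = f 1 / h 0 * h 0 := (div_mul_cancel₀ _ hh0).symm
      refine ⟨α, hα, h 1 / h 0, f 1 / h 0, fun hts ↦ hne α hα hf0 ?_, fun x hx ↦ ?_⟩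
      · exact (div_left_inj' hh0).mp (hts.trans (mul_div_assoc _ _ _).symm)
      · obtain ⟨θ, hθ, heq⟩ := hX' hx
        refine ⟨θ, hθ, mul_right_cancel₀ hh0 ?_⟩
        rw [hf0, hf1, hh1] at heq
        linear_combination heq
  · rintro ⟨α, hα, s, t, hts, hS⟩
    refine ⟨vec2 α t, vec2 1 s, ⟨⟨α, hα, by simp [vec2]⟩, fun x hx ↦ ?_⟩, fun θ _ h0 h1 ↦ ?_⟩
    · obtain ⟨θ, hθ, heq⟩ := hS hx
      exact ⟨θ, hθ, by simpa [vec2, mul_comm] using heq⟩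
    · simp only [vec2, PiLp.toLp_apply, Matrix.cons_val_zero, Matrix.cons_val_one, mul_one] at h0 h1
      exact hts (by rw [h1, h0])

section Mobius

variable {α s t θ θ' z w : ℂ}

lemma mobius_sub_infty_mul (hz : α * z + t = θ * (z + s)) : (θ - α) * (z + s) = t - α * s := by
  linear_combination -hz

lemma mobius_sub_mul (hz : α * z + t = θ * (z + s)) (hw : α * w + t = θ' * (w + s)) :
    (θ - θ') * ((z + s) * (w + s)) = (α * s - t) * (z - w) := by
  linear_combination (z + s) * hw - (w + s) * hz

lemma add_ne_zero_of_mobius (hts : t ≠ α * s) (hz : α * z + t = θ * (z + s)) : z + s ≠ 0 :=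
  fun h ↦ hts (sub_eq_zero.mp (by rw [← mobius_sub_infty_mul hz, h, mul_zero]))

lemma ne_infty_of_mobius (hts : t ≠ α * s) (hz : α * z + t = θ * (z + s)) : θ ≠ α := fun h ↦
  hts (sub_eq_zero.mp (by rw [← mobius_sub_infty_mul hz, h, sub_self, zero_mul]))

lemma ne_of_mobius (hts : t ≠ α * s) (hz : α * z + t = θ * (z + s))
    (hw : α * w + t = θ' * (w + s)) (hzw : z ≠ w) : θ ≠ θ' := fun h ↦
  mul_ne_zero (sub_ne_zero.mpr hts.symm) (sub_ne_zero.mpr hzw)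
    (by rw [← mobius_sub_mul hz hw, h, sub_self, zero_mul])

lemma crossRatio_of_mobius {A B C θa θb θc : ℂ} (hts : t ≠ α * s)
    (hA : α * A + t = θa * (A + s)) (hB : α * B + t = θb * (B + s))
    (hC : α * C + t = θc * (C + s)) (hAB : A ≠ B) :
    crossRatio θc θb θa α = (C - A) / (B - A) := by
  have hK : (A + s) * (B + s) * (C + s) ≠ 0 := mul_ne_zero (mul_ne_zero
    (add_ne_zero_of_mobius hts hA) (add_ne_zero_of_mobius hts hB)) (add_ne_zero_of_mobius hts hC)
  rw [crossRatio, div_eq_div_iff (mul_ne_zero (sub_ne_zero.mpr (ne_infty_of_mobius hts hC))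
    (sub_ne_zero.mpr (ne_of_mobius hts hB hA hAB.symm))) (sub_ne_zero.mpr hAB.symm)]
  refine mul_left_cancel₀ hK ?_
  linear_combination (B - A) * ((θb - α) * (B + s)) * mobius_sub_mul hC hA
    + (B - A) * (α * s - t) * (C - A) * mobius_sub_infty_mul hB
    - (C - A) * ((θb - θa) * ((B + s) * (A + s))) * mobius_sub_infty_mul hC
    - (C - A) * (t - α * s) * mobius_sub_mul hB hA

end Mobius

lemma exists_mobius_of_two {α β γ P Q : ℂ} (hαβ : α ≠ β) (hβγ : β ≠ γ) (hαγ : α ≠ γ)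
    (hPQ : P ≠ Q) :
    ∃ s t : ℂ, t ≠ α * s ∧ α * P + t = β * (P + s) ∧ α * Q + t = γ * (Q + s) := by
  -- `u` is the value of `P + s`, forced by `(β - α) (P + s) = t - α s = (γ - α) (Q + s)`
  obtain ⟨u, hu⟩ : ∃ u, (β - γ) * u = (γ - α) * (Q - P) :=
    ⟨_, mul_div_cancel₀ _ (sub_ne_zero.mpr hβγ)⟩
  have hu0 : u ≠ 0 := right_ne_zero_of_mul
    (hu ▸ mul_ne_zero (sub_ne_zero.mpr hαγ.symm) (sub_ne_zero.mpr hPQ.symm))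
  refine ⟨u - P, α * (u - P) + (β - α) * u, fun h ↦ ?_, by ring, by linear_combination hu⟩
  exact mul_ne_zero (sub_ne_zero.mpr hαβ.symm) hu0 (by linear_combination h)

lemma mobiusInto_of_subset_pair {Θ S : Set ℂ} {P Q : ℂ} (hΘ : 2 < Θ.ncard) (hS : S ⊆ {P, Q}) :
    MobiusInto Θ S := by
  obtain ⟨α, β, γ, hα, hβ, hγ, hαβ, hαγ, hβγ⟩ :=
    (Set.two_lt_ncard_iff (Set.finite_of_ncard_pos (by omega))).mp hΘ
  obtain ⟨Q', hPQ', hS'⟩ : ∃ Q', P ≠ Q' ∧ S ⊆ {P, Q'} := by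
    by_cases hPQ : P = Q
    · exact ⟨P + 1, by simp, hS.trans (by simp [hPQ])⟩
    · exact ⟨Q, hPQ, hS⟩
  obtain ⟨s, t, hts, hP, hQ⟩ := exists_mobius_of_two hαβ hβγ hαγ hPQ'
  refine ⟨α, hα, s, t, hts, fun z hz ↦ ?_⟩
  rcases hS' hz with rfl | rfl
  exacts [⟨β, hβ, hP⟩, ⟨γ, hγ, hQ⟩]

lemma mobius_eq_of_crossRatio {θ₁ θ₂ θ₃ θ₄ A B C s t : ℂ} (hAB : A ≠ B) (h14 : θ₁ ≠ θ₄)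
    (h23 : θ₂ ≠ θ₃) (hA : θ₄ * A + t = θ₃ * (A + s)) (hB : θ₄ * B + t = θ₂ * (B + s))
    (hcr : (C - A) / (B - A) = crossRatio θ₁ θ₂ θ₃ θ₄) :
    θ₄ * C + t = θ₁ * (C + s) := by
  rw [crossRatio, div_eq_div_iff (sub_ne_zero.mpr hAB.symm)
    (mul_ne_zero (sub_ne_zero.mpr h14) (sub_ne_zero.mpr h23))] at hcr
  refine sub_eq_zero.mp ((mul_eq_zero.mp ?_).resolve_left (sub_ne_zero.mpr h23))
  linear_combination (θ₂ - θ₁) * hA + (θ₁ - θ₃) * hB - hcr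

lemma mobiusInto_of_crossRatio {θ₁ θ₂ θ₃ θ₄ A B C : ℂ} (h13 : θ₁ ≠ θ₃) (h14 : θ₁ ≠ θ₄)
    (h23 : θ₂ ≠ θ₃) (h24 : θ₂ ≠ θ₄) (h34 : θ₃ ≠ θ₄)
    (hcr : (C - A) / (B - A) = crossRatio θ₁ θ₂ θ₃ θ₄) :
    MobiusInto {θ₁, θ₂, θ₃, θ₄} {A, B, C} := by
  have hAB : A ≠ B := by
    rintro rfl
    refine div_ne_zero (mul_ne_zero (sub_ne_zero.mpr h13) (sub_ne_zero.mpr h24))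
      (mul_ne_zero (sub_ne_zero.mpr h14) (sub_ne_zero.mpr h23)) ?_
    rw [← crossRatio, ← hcr, sub_self, div_zero]
  obtain ⟨s, t, hts, hA, hB⟩ := exists_mobius_of_two h34.symm h23.symm h24.symm hAB
  refine ⟨θ₄, by simp, s, t, hts, ?_⟩
  rintro z (rfl | rfl | rfl)
  exacts [⟨θ₃, by simp, hA⟩, ⟨θ₂, by simp, hB⟩,
    ⟨θ₁, by simp, mobius_eq_of_crossRatio hAB h14 h23 hA hB hcr⟩]

lemma exists_crossRatio_of_mobiusInto {Θ : Set ℂ} {A B C : ℂ} (hΘ : Θ.ncard = 4)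
    (h : MobiusInto Θ {A, B, C}) (hAB : A ≠ B) (hAC : A ≠ C) (hBC : B ≠ C) :
    ∃ θ₁ θ₂ θ₃ θ₄ : ℂ, Θ = {θ₁, θ₂, θ₃, θ₄} ∧
      θ₁ ≠ θ₂ ∧ θ₁ ≠ θ₃ ∧ θ₁ ≠ θ₄ ∧ θ₂ ≠ θ₃ ∧ θ₂ ≠ θ₄ ∧ θ₃ ≠ θ₄ ∧
      (C - A) / (B - A) = crossRatio θ₁ θ₂ θ₃ θ₄ := by
  obtain ⟨α, hα, s, t, hts, hS⟩ := h
  obtain ⟨θa, hθa, hA⟩ := hS A (by simp)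
  obtain ⟨θb, hθb, hB⟩ := hS B (by simp)
  obtain ⟨θc, hθc, hC⟩ := hS C (by simp)
  have hcb := ne_of_mobius hts hC hB hBC.symm
  have hca := ne_of_mobius hts hC hA hAC.symm
  have hba := ne_of_mobius hts hB hA hAB.symm
  have hcα := ne_infty_of_mobius hts hC
  have hbα := ne_infty_of_mobius hts hB
  have haα := ne_infty_of_mobius hts hA
  have hsub : {θc, θb, θa, α} ⊆ Θ := by
    simp only [Set.insert_subset_iff, Set.singleton_subset_iff]
    exact ⟨hθc, hθb, hθa, hα⟩
  have hcard : Θ.ncard ≤ ({θc, θb, θa, α} : Set ℂ).ncard := by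
    rw [hΘ, Set.ncard_eq_four.mpr ⟨_, _, _, _, hcb, hca, hcα, hba, hbα, haα, rfl⟩]
  have hΘeq := Set.eq_of_subset_of_ncard_le hsub hcard (Set.finite_of_ncard_pos (by omega))
  exact ⟨θc, θb, θa, α, hΘeq.symm,
    hcb, hca, hcα, hba, hbα, haα, (crossRatio_of_mobius hts hA hB hC hAB).symm⟩

theorem stmt18_general (a b c : ℂ) (Θ : Set ℂ) (hcard : Θ.ncard = 4) :
    ¬ DoesPR (Gabc a b c) Θ ↔
      a = b ∨ b = c ∨ a = c ∨
      ∃ θ₁ θ₂ θ₃ θ₄ : ℂ, Θ = {θ₁, θ₂, θ₃, θ₄} ∧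
        θ₁ ≠ θ₂ ∧ θ₁ ≠ θ₃ ∧ θ₁ ≠ θ₄ ∧ θ₂ ≠ θ₃ ∧ θ₂ ≠ θ₄ ∧ θ₃ ≠ θ₄ ∧
        (c - a) / (b - a) = starRingEnd ℂ (crossRatio θ₁ θ₂ θ₃ θ₄) := by
  have hGabc : Gabc a b c = insert (vec2 1 0) ((fun x ↦ vec2 x 1) '' {a, b, c}) := by
    simp [Gabc, Set.image_insert_eq]
  have hconj (w : ℂ) : (c - a) / (b - a) = conj w ↔ (conj c - conj a) / (conj b - conj a) = w := by
    rw [← (starRingEnd ℂ).injective.eq_iff, Complex.conj_conj, map_div₀, map_sub, map_sub, eq_comm]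
  simp only [hconj]
  rw [hGabc, not_doesPR_insert_image_iff (Set.insert_nonempty _ _), Set.image_insert_eq,
    Set.image_insert_eq, Set.image_singleton]
  constructor
  · rw [or_iff_not_imp_left, or_iff_not_imp_left, or_iff_not_imp_left]
    intro hM hab hbc hac
    have hconj_ne {x y : ℂ} : x ≠ y → conj x ≠ conj y := (starRingEnd ℂ).injective.ne
    exact exists_crossRatio_of_mobiusInto hcard hM (hconj_ne hab) (hconj_ne hac) (hconj_ne hbc)
  · rintro (rfl | rfl | rfl | ⟨θ₁, θ₂, θ₃, θ₄, rfl, -, h13, h14, h23, h24, h34, hcr⟩)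
    · exact mobiusInto_of_subset_pair (P := conj a) (Q := conj c) (by omega) (by simp)
    · exact mobiusInto_of_subset_pair (P := conj a) (Q := conj b) (by omega) (by simp)
    · exact mobiusInto_of_subset_pair (P := conj b) (Q := conj a) (by omega) (by simp)
    · exact mobiusInto_of_crossRatio h13 h14 h23 h24 h34 hcr

theorem stmt18 (a b c : ℂ) (Θ : Set ℂ) (hΘ : Θ ⊆ unitCircle) (hcard : Θ.ncard = 4) :
    ¬ DoesPR (Gabc a b c) Θ ↔
      a = b ∨ b = c ∨ a = c ∨
      ∃ θ₁ θ₂ θ₃ θ₄ : ℂ, Θ = {θ₁, θ₂, θ₃, θ₄} ∧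
        θ₁ ≠ θ₂ ∧ θ₁ ≠ θ₃ ∧ θ₁ ≠ θ₄ ∧ θ₂ ≠ θ₃ ∧ θ₂ ≠ θ₄ ∧ θ₃ ≠ θ₄ ∧
        (c - a) / (b - a) = starRingEnd ℂ (crossRatio θ₁ θ₂ θ₃ θ₄) :=
  stmt18_general a b c Θ hcard
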